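/- arXiv:0906.1126 — 2 statements merged into one kernel-verified Lean document; each statement's English description precedes it below -/
import Mathlib

section
/- For every integer n ≥ 5, the chromatic number of the square of T_{5,n} = C_5 □ C_n equals: 5 if n ≡ 0 (mod 5); 7 if n = 7; and 6 otherwise. -/
open SimpleGraph

/-- The square of a simple graph `G`: distinct vertices are adjacent iff they are
adjacent in `G` or have a common neighbor in `G` (i.e. are at distance at most 2). -/
def SimpleGraph.square {V : Type*} (G : SimpleGraph V) : SimpleGraph V where
  Adj u v := u ≠ v ∧ (G.Adj u v ∨ ∃ w, G.Adj u w ∧ G.Adj w v)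
  symm := ⟨fun u v => by
    rintro ⟨h, h' | ⟨w, hw1, hw2⟩⟩
    exacts [⟨h.symm, Or.inl h'.symm⟩, ⟨h.symm, Or.inr ⟨w, hw2.symm, hw1.symm⟩⟩]⟩
  loopless := ⟨fun v => by simp⟩

/-- The toroidal grid `T_{m,n} = C_m □ C_n`. -/
def toroidalGrid (m n : ℕ) : SimpleGraph (Fin m × Fin n) :=
  SimpleGraph.cycleGraph m □ SimpleGraph.cycleGraph n

/-- The independence number of a graph: the maximum size of an independent set,
i.e. the clique number of the complement graph. -/
noncomputable def SimpleGraph.indepNum' {V : Type*} (G : SimpleGraph V) : ℕ :=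
  Gᶜ.cliqueNum

/-!
Every vertex of `T_{5,n}²` within distance two of `(i, j)` lies in one of the columns
`j - 2, …, j + 2`, so a colouring of `T_{5,n}²` is the same thing as an `n`-periodic sequence of
columns in which every three consecutive columns satisfy a local condition.

Upper bounds: explicit periodic column sequences. The 5-colouring `(i, j) ↦ 2i + j` has period
`5`, the 7-colouring `(i, j) ↦ 4i + j` period `7`; four 6-colourings of periods `5, 6, 8, 9`
share their first two columns and can therefore be concatenated, which yields every period
`n ≥ 5` with `5 ∤ n` other than `7`.

Lower bounds: a column is a 5-clique. If an independent set meets consecutive columns, its rows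
advance by a constant step `d ∈ {2, 3}` modulo `5`. A colour class of a 5-colouring meets every
column, which forces `n • d ≡ 0 (mod 5)`, i.e. `5 ∣ n`. For `n = 7`, an independent set with
six vertices meets six consecutive columns; its first and last vertices, five steps apart, lie
in the same row two columns apart. So six colour classes cover at most `30` of the `35`
vertices of `T_{5,7}²`.
-/

open Function Fin.CommRing Finset

namespace SimpleGraph

variable {V α : Type*} {G : SimpleGraph V}

instance [Fintype V] [DecidableEq V] [DecidableRel G.Adj] : DecidableRel G.square.Adj :=
  fun u v => inferInstanceAs (Decidable (u ≠ v ∧ (G.Adj u v ∨ ∃ w, G.Adj u w ∧ G.Adj w v)))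

lemma Adj.square {u v : V} (h : G.Adj u v) : G.square.Adj u v := ⟨h.ne, Or.inl h⟩

lemma square_boxProd_adj {W : Type*} {H : SimpleGraph W} {x y : V × W} :
    (G □ H).square.Adj x y ↔ (x.2 = y.2 ∧ G.square.Adj x.1 y.1) ∨
      (x.1 = y.1 ∧ H.square.Adj x.2 y.2) ∨ (G.Adj x.1 y.1 ∧ H.Adj x.2 y.2) := by
  obtain ⟨a, b⟩ := x
  obtain ⟨a', b'⟩ := y
  simp only [square, boxProd_adj, ne_eq, Prod.mk.injEq, Prod.exists]
  constructor
  · rintro ⟨hne, h | ⟨c, d, h₁, h₂⟩⟩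
    · aesop
    · rcases h₁ with ⟨h₁, rfl⟩ | ⟨h₁, rfl⟩ <;> rcases h₂ with ⟨h₂, rfl⟩ | ⟨h₂, rfl⟩ <;> aesop
  · rintro (⟨rfl, hne, h⟩ | ⟨rfl, hne, h⟩ | ⟨h₁, h₂⟩)
    · aesop
    · aesop
    · exact ⟨fun h => h₁.ne h.1, Or.inr ⟨a', b, Or.inl ⟨h₁, rfl⟩, Or.inr ⟨h₂, rfl⟩⟩⟩

section cycleGraph

variable {n : ℕ} [NeZero n]

lemma cycleGraph_adj_add_one (hn : 2 ≤ n) (b : Fin n) : (cycleGraph n).Adj b (b + 1) := by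
  obtain ⟨m, rfl⟩ := Nat.exists_eq_add_of_le' hn
  exact cycleGraph_adj.2 (Or.inr (add_sub_cancel_left b 1))

lemma eq_add_one_or_of_cycleGraph_adj {b b' : Fin n} (h : (cycleGraph n).Adj b b') :
    b' = b + 1 ∨ b = b' + 1 := by
  obtain _ | _ | m := n
  · exact b.elim0
  · exact (cycleGraph_one_adj h).elim
  · rcases cycleGraph_adj.1 h with h | h
    · exact Or.inr (sub_eq_iff_eq_add'.1 h)
    · exact Or.inl (sub_eq_iff_eq_add'.1 h)

lemma eq_add_or_of_square_cycleGraph_adj {b b' : Fin n} (h : (cycleGraph n).square.Adj b b') :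
    b' = b + 1 ∨ b = b' + 1 ∨ b' = b + 2 ∨ b = b' + 2 := by
  have two : ∀ c : Fin n, c + 1 + 1 = c + 2 := fun c => by ring
  obtain ⟨hne, h | ⟨w, h₁, h₂⟩⟩ := h
  · rcases eq_add_one_or_of_cycleGraph_adj h with h | h <;> simp [h]
  · rcases eq_add_one_or_of_cycleGraph_adj h₁ with rfl | rfl <;>
      rcases eq_add_one_or_of_cycleGraph_adj h₂ with rfl | h
    · simp [two]
    · exact (hne (add_right_cancel h)).elim
    · exact (hne rfl).elim
    · simp [h, two]

end cycleGraph

variable (G)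

/-- The constraints that a colouring of `(G □ C_n)²` imposes between a column `x` and the two
columns `y`, `z` following it. -/
def ProperWindow (x y z : V → α) : Prop :=
  (∀ i j, G.square.Adj i j → x i ≠ x j) ∧ (∀ i j, (i = j ∨ G.Adj i j) → x i ≠ y j) ∧
    ∀ i, x i ≠ z i

instance [Fintype V] [DecidableEq V] [DecidableRel G.Adj] [DecidableEq α] (x y z : V → α) :
    Decidable (G.ProperWindow x y z) := by
  unfold ProperWindow; infer_instance

def IsColumnCycle (f : ℕ → V → α) (n : ℕ) : Prop :=
  Periodic f n ∧ ∀ j, G.ProperWindow (f j) (f (j + 1)) (f (j + 2))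

def HasColumnCycle (x y : V → α) (n : ℕ) : Prop :=
  ∃ f, G.IsColumnCycle f n ∧ f 0 = x ∧ f 1 = y

variable {G}

lemma _root_.Function.Periodic.apply_val_add_natCast {f : ℕ → α} {n : ℕ} [NeZero n]
    (hf : Periodic f n) (b : Fin n) (k : ℕ) : f ↑(b + k : Fin n) = f (↑b + k) := by
  rw [Fin.val_add, Fin.val_natCast, Nat.add_mod_mod, hf.map_mod_nat]

namespace IsColumnCycle

variable {f : ℕ → V → α} {n : ℕ}

lemma of_forall_lt (hf : Periodic f n) (hn : 0 < n)
    (hw : ∀ r < n, G.ProperWindow (f r) (f (r + 1)) (f (r + 2))) : G.IsColumnCycle f n := by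
  refine ⟨hf, fun j => ?_⟩
  have hadd : ∀ t, f (j + t) = f (j % n + t) := fun t => by
    rw [← hf.map_mod_nat, ← hf.map_mod_nat (j % n + t), Nat.mod_add_mod]
  rw [hadd 1, hadd 2, ← hf.map_mod_nat j]
  exact hw _ (Nat.mod_lt _ hn)

variable [NeZero n]

lemma window (hf : G.IsColumnCycle f n) (b : Fin n) :
    G.ProperWindow (f b) (f (b + 1 : Fin n)) (f (b + 2 : Fin n)) := by
  have h₁ : f (b + 1 : Fin n) = f (b + 1) := by simpa using hf.1.apply_val_add_natCast b 1
  have h₂ : f (b + 2 : Fin n) = f (b + 2) := by simpa using hf.1.apply_val_add_natCast b 2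
  rw [h₁, h₂]
  exact hf.2 b

def coloring (hf : G.IsColumnCycle f n) : (G □ cycleGraph n).square.Coloring α :=
  Coloring.mk (fun v => f v.2 v.1) <| by
    rintro ⟨a, b⟩ ⟨a', b'⟩ h
    rw [square_boxProd_adj] at h
    dsimp only at h ⊢
    rcases h with ⟨rfl, h⟩ | ⟨rfl, h⟩ | ⟨ha, hb⟩
    · exact (hf.window b).1 a a' h
    · rcases eq_add_or_of_square_cycleGraph_adj h with rfl | rfl | rfl | rfl
      · exact (hf.window b).2.1 a a (Or.inl rfl)
      · exact ((hf.window b').2.1 a a (Or.inl rfl)).symm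
      · exact (hf.window b).2.2 a
      · exact ((hf.window b').2.2 a).symm
    · rcases eq_add_one_or_of_cycleGraph_adj hb with rfl | rfl
      · exact (hf.window b).2.1 a a' (Or.inr ha)
      · exact ((hf.window b').2.1 a' a (Or.inr ha.symm)).symm

end IsColumnCycle

namespace HasColumnCycle

variable {x y : V → α} {p q : ℕ}

lemma of_fin [NeZero p] (T : Fin p → V → α)
    (hT : ∀ b, G.ProperWindow (T b) (T (b + 1)) (T (b + 2))) :
    G.HasColumnCycle (T 0) (T 1) p := by
  refine ⟨fun j => T j, ⟨fun j => by simp, fun j => ?_⟩, by simp, by simp⟩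
  simpa using hT j

lemma add (hx : G.HasColumnCycle x y p) (hy : G.HasColumnCycle x y q) (hp : 2 ≤ p)
    (hq : 2 ≤ q) : G.HasColumnCycle x y (p + q) := by
  obtain ⟨f, ⟨hf, hfw⟩, hf0, hf1⟩ := hx
  obtain ⟨g, ⟨hg, hgw⟩, hg0, hg1⟩ := hy
  have hfg : ∀ r < 2, f r = g r := by
    intro r hr
    interval_cases r
    exacts [hf0.trans hg0.symm, hf1.trans hg1.symm]
  set h : ℕ → V → α := fun j => if j % (p + q) < p then f (j % (p + q)) else g (j % (p + q) - p)
  have hh : Periodic h (p + q) := fun j => by simp only [h, Nat.add_mod_right]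
  have hh_f : ∀ r < p + 2, h r = f r := by
    intro r hr
    simp only [h, Nat.mod_eq_of_lt (show r < p + q by omega)]
    split_ifs with hrp
    · rfl
    · rw [← hfg _ (by omega), ← hf (r - p), Nat.sub_add_cancel (by omega)]
  have hh_g : ∀ r, p ≤ r → r < p + q + 2 → h r = g (r - p) := by
    intro r hpr hr
    by_cases hrq : r < p + q
    · simp only [h, Nat.mod_eq_of_lt hrq, if_neg (show ¬ r < p by omega)]
    · have hmod : r % (p + q) = r - (p + q) := by
        rw [Nat.mod_eq_sub_mod (by omega), Nat.mod_eq_of_lt (by omega)]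
      simp only [h, hmod, if_pos (show r - (p + q) < p by omega)]
      rw [hfg _ (by omega), ← hg (r - (p + q)), show r - (p + q) + q = r - p by omega]
  refine ⟨h, .of_forall_lt hh (by omega) fun r hr => ?_, by rw [hh_f 0 (by omega), hf0],
    by rw [hh_f 1 (by omega), hf1]⟩
  by_cases hrp : r < p
  · rw [hh_f r (by omega), hh_f (r + 1) (by omega), hh_f (r + 2) (by omega)]
    exact hfw r
  · rw [hh_g r (by omega) (by omega), hh_g (r + 1) (by omega) (by omega),
      hh_g (r + 2) (by omega) (by omega), show r + 1 - p = r - p + 1 by omega,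
      show r + 2 - p = r - p + 2 by omega]
    exact hgw (r - p)

lemma mul (h : G.HasColumnCycle x y p) (hp : 2 ≤ p) {a : ℕ} (ha : 1 ≤ a) :
    G.HasColumnCycle x y (p * a) := by
  induction a, ha using Nat.le_induction with
  | base => rwa [mul_one]
  | succ a ha ih => rw [mul_add_one]; exact ih.add h (le_mul_of_le_of_one_le hp ha) hp

lemma colorable {k n : ℕ} [NeZero n] {x y : V → Fin k} (h : G.HasColumnCycle x y n) :
    (G □ cycleGraph n).square.Colorable k :=
  let ⟨_, hf, _⟩ := h
  ⟨hf.coloring⟩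

end HasColumnCycle

end SimpleGraph

lemma Finset.exists_forall_ne_mem {β : Type*} [Fintype β] [DecidableEq β] [Nonempty β]
    {T : Finset β} (hT : Fintype.card β ≤ #T + 1) : ∃ e, ∀ b ≠ e, b ∈ T := by
  obtain ⟨e, he⟩ := card_le_one_iff_subset_singleton.1
    (show #Tᶜ ≤ 1 by rw [card_compl]; omega)
  exact ⟨e, fun b hb => by simpa using mt (@he b) (by simpa using hb)⟩

namespace toroidalGrid

variable {n : ℕ}

lemma square_adj_of_ne {a a' : Fin 5} (h : a ≠ a') (b : Fin n) :
    (toroidalGrid 5 n).square.Adj (a, b) (a', b) := by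
  have hsq : ∀ a a' : Fin 5, a ≠ a' → (cycleGraph 5).square.Adj a a' := by decide
  exact square_boxProd_adj.2 (Or.inl ⟨rfl, hsq a a' h⟩)

lemma injective_column {α : Type*} (c : (toroidalGrid 5 n).square.Coloring α) (b : Fin n) :
    Injective fun a => c (a, b) := fun a a' h => by
  by_contra hne
  exact c.valid (square_adj_of_ne hne b) h

lemma eq_of_mem_column {S : Set (Fin 5 × Fin n)} (hS : (toroidalGrid 5 n).square.IsIndepSet S)
    {a a' : Fin 5} {b : Fin n} (h : (a, b) ∈ S) (h' : (a', b) ∈ S) : a = a' := by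
  by_contra hne
  have hadj := square_adj_of_ne hne b
  exact hS h h' hadj.ne hadj

section

variable [NeZero n]

lemma not_colorable_four : ¬ (toroidalGrid 5 n).square.Colorable 4 := by
  rintro ⟨c⟩
  simpa using Fintype.card_le_of_injective _ (injective_column c 0)

lemma square_adj_add_one (hn : 2 ≤ n) {a a' : Fin 5} (h : a = a' ∨ (cycleGraph 5).Adj a a')
    (b : Fin n) : (toroidalGrid 5 n).square.Adj (a, b) (a', b + 1) := by
  refine square_boxProd_adj.2 (Or.inr ?_)
  rcases h with rfl | h
  · exact Or.inl ⟨rfl, (cycleGraph_adj_add_one hn b).square⟩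
  · exact Or.inr ⟨h, cycleGraph_adj_add_one hn b⟩

lemma square_adj_add_two (hn : 3 ≤ n) (a : Fin 5) (b : Fin n) :
    (toroidalGrid 5 n).square.Adj (a, b) (a, b + 2) := by
  refine square_boxProd_adj.2 (Or.inr (Or.inl ⟨rfl, ?_, Or.inr ⟨b + 1, ?_, ?_⟩⟩))
  · simp [Fin.ext_iff, Nat.mod_eq_of_lt (show 2 < n by omega)]
  · exact cycleGraph_adj_add_one (by omega) b
  · rw [show b + 2 = b + 1 + 1 by ring]
    exact cycleGraph_adj_add_one (by omega) (b + 1)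

section IsIndepSet

variable {S : Set (Fin 5 × Fin n)}

lemma sub_eq_two_or_three (hS : (toroidalGrid 5 n).square.IsIndepSet S) (hn : 2 ≤ n)
    {x y : Fin 5} {b : Fin n} (hx : (x, b) ∈ S) (hy : (y, b + 1) ∈ S) : y - x = 2 ∨ y - x = 3 := by
  have key : ∀ x y : Fin 5, (x = y ∨ (cycleGraph 5).Adj x y) ∨ y - x = 2 ∨ y - x = 3 := by
    decide
  refine (key x y).resolve_left fun h => ?_
  have hadj := square_adj_add_one hn h b
  exact hS hx hy hadj.ne hadj

lemma ne_of_mem_add_two (hS : (toroidalGrid 5 n).square.IsIndepSet S) (hn : 3 ≤ n)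
    {x y : Fin 5} {b : Fin n} (hx : (x, b) ∈ S) (hy : (y, b + 2) ∈ S) : x ≠ y := by
  rintro rfl
  have hadj := square_adj_add_two hn x b
  exact hS hx hy hadj.ne hadj

lemma sub_eq_sub (hS : (toroidalGrid 5 n).square.IsIndepSet S) (hn : 3 ≤ n)
    {x y z : Fin 5} {b : Fin n} (hx : (x, b) ∈ S) (hy : (y, b + 1) ∈ S) (hz : (z, b + 2) ∈ S) :
    z - y = y - x := by
  have key : ∀ d e : Fin 5, (d = 2 ∨ d = 3) → (e = 2 ∨ e = 3) → e + d ≠ 0 → e = d := by decide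
  refine key _ _ (sub_eq_two_or_three hS (by omega) hx hy)
    (sub_eq_two_or_three hS (by omega) hy (by rwa [show b + 1 + 1 = b + 2 by ring])) ?_
  rw [sub_add_sub_cancel, sub_ne_zero]
  exact (ne_of_mem_add_two hS hn hx hz).symm

lemma sub_eq_nsmul (hS : (toroidalGrid 5 n).square.IsIndepSet S) (hn : 3 ≤ n)
    {r : ℕ → Fin 5} {b : Fin n} {k : ℕ} (hr : ∀ t ≤ k, (r t, b + t) ∈ S) :
    r k - r 0 = k • (r 1 - r 0) := by
  have hstep : ∀ t < k, r (t + 1) - r t = r 1 - r 0 := by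
    intro t ht
    induction t with
    | zero => rfl
    | succ t ih =>
      rw [← ih (by omega)]
      refine sub_eq_sub hS hn (hr t (by omega)) ?_ ?_
      · simpa [add_assoc] using hr (t + 1) (by omega)
      · simpa [add_assoc, one_add_one_eq_two] using hr (t + 2) (by omega)
  rw [← sum_range_sub, sum_congr rfl fun t ht => hstep t (mem_range.1 ht), sum_const,
    card_range]

end IsIndepSet

lemma not_colorable_five (hn : 3 ≤ n) (h5 : ¬ 5 ∣ n) :
    ¬ (toroidalGrid 5 n).square.Colorable 5 := by
  rintro ⟨c⟩
  obtain ⟨r, hr⟩ : ∃ r : Fin n → Fin 5, ∀ b, c (r b, b) = 0 :=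
    ⟨_, fun b => surjInv_eq (Finite.surjective_of_injective (injective_column c b)) 0⟩
  have hrow : ∀ t ≤ n, (r t, (0 : Fin n) + t) ∈ c.colorClass 0 := fun t _ => by
    simpa [Coloring.colorClass] using hr t
  have hd := sub_eq_two_or_three (c.isIndepSet_colorClass 0) (by omega) (hrow 0 (by omega))
    (by simpa using hrow 1 (by omega))
  have hnd := sub_eq_nsmul (c.isIndepSet_colorClass 0) hn hrow
  simp only [Fin.natCast_self, Nat.cast_zero, sub_self, nsmul_eq_mul] at hnd
  have key : ∀ m d : Fin 5, (d = 2 ∨ d = 3) → 0 = m * d → m = 0 := by decide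
  exact h5 (Fin.natCast_eq_zero.1 (key _ _ (by simpa using hd) hnd))

end

lemma card_le_five_of_isIndepSet {S : Finset (Fin 5 × Fin 7)}
    (hS : (toroidalGrid 5 7).square.IsIndepSet S) : #S ≤ 5 := by
  by_contra! h
  have hcard : #(S.image Prod.snd) = #S := card_image_of_injOn
    fun v hv w hw hvw => Prod.ext (eq_of_mem_column hS (b := v.2) hv (hvw ▸ hw)) hvw
  have hne : ∀ (e : Fin 7) (t : ℕ), t ≤ 5 → e + 1 + (t : Fin 7) ≠ e := by decide
  obtain ⟨e, he⟩ := exists_forall_ne_mem (T := S.image Prod.snd) (by simp; omega)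
  have hrow : ∀ t : ℕ, ∃ a : Fin 5, t ≤ 5 → (a, e + 1 + t) ∈ S := by
    intro t
    by_cases ht : t ≤ 5
    · obtain ⟨v, hv, hve⟩ := mem_image.1 (he _ (hne e t ht))
      exact ⟨v.1, fun _ => hve ▸ hv⟩
    · exact ⟨0, fun h => (ht h).elim⟩
  choose r hr using hrow
  have h5 := sub_eq_nsmul hS (by norm_num) (b := e + 1) (k := 5) (fun t ht => hr t ht)
  have key : ∀ d : Fin 5, 5 • d = 0 := by decide
  rw [key, sub_eq_zero] at h5
  refine ne_of_mem_add_two hS (by norm_num) (b := e + 1 + 5) (hr 5 le_rfl) ?_ h5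
  rw [add_assoc _ 5, show (5 + 2 : Fin 7) = (0 : ℕ) from rfl]
  exact hr 0 (by norm_num)

lemma not_colorable_six : ¬ (toroidalGrid 5 7).square.Colorable 6 := by
  rintro ⟨c⟩
  obtain ⟨k, hk⟩ := Fintype.exists_lt_card_fiber_of_mul_lt_card (f := c) (n := 5) (by simp)
  refine hk.not_ge (card_le_five_of_isIndepSet ?_)
  simpa [Coloring.colorClass] using c.isIndepSet_colorClass k

def diagonalColumns : Fin 5 → Fin 5 → Fin 5 := fun b i => b + 2 * i

def sevenColumns : Fin 7 → Fin 5 → Fin 7 := fun b i => b + 4 * (i : ℕ)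

/- Found by a computer search. The four 6-colour column cycles begin with the same two
columns, so that `HasColumnCycle.add` can concatenate them. -/

def sixStart₀ : Fin 5 → Fin 6 := ![0, 1, 2, 3, 4]

def sixStart₁ : Fin 5 → Fin 6 := ![2, 3, 0, 5, 1]

def sixColumns₅ : Fin 5 → Fin 5 → Fin 6 :=
  ![sixStart₀, sixStart₁, ![4, 5, 1, 2, 0], ![1, 0, 3, 4, 5], ![3, 4, 5, 0, 2]]

def sixColumns₆ : Fin 6 → Fin 5 → Fin 6 :=
  ![sixStart₀, sixStart₁, ![5, 4, 1, 2, 0], ![1, 0, 5, 4, 3], ![4, 2, 3, 0, 5], ![3, 5, 4, 1, 2]]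

def sixColumns₈ : Fin 8 → Fin 5 → Fin 6 :=
  ![sixStart₀, sixStart₁, ![4, 5, 1, 2, 0], ![1, 0, 4, 3, 5], ![2, 3, 5, 0, 4], ![5, 4, 1, 2, 3],
    ![1, 2, 3, 5, 0], ![3, 5, 4, 1, 2]]

def sixColumns₉ : Fin 9 → Fin 5 → Fin 6 :=
  ![sixStart₀, sixStart₁, ![4, 5, 1, 2, 3], ![0, 2, 3, 4, 5], ![3, 1, 5, 0, 2], ![5, 0, 4, 3, 1],
    ![4, 3, 1, 2, 0], ![1, 2, 0, 4, 5], ![3, 4, 5, 1, 2]]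

lemma colorable_seven : (toroidalGrid 5 7).square.Colorable 7 :=
  (HasColumnCycle.of_fin sevenColumns (by decide)).colorable

lemma hasColumnCycle_six (hn : 5 ≤ n) (h5 : n % 5 ≠ 0) (h7 : n ≠ 7) :
    (cycleGraph 5).HasColumnCycle sixStart₀ sixStart₁ n := by
  have c₅ : (cycleGraph 5).HasColumnCycle sixStart₀ sixStart₁ 5 := .of_fin sixColumns₅ (by decide)
  have c₆ : (cycleGraph 5).HasColumnCycle sixStart₀ sixStart₁ 6 := .of_fin sixColumns₆ (by decide)
  induction n using Nat.strong_induction_on with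
  | _ n ih =>
  obtain rfl | rfl | rfl | rfl | ⟨h11, h12⟩ :
      n = 6 ∨ n = 8 ∨ n = 9 ∨ n = 12 ∨ 11 ≤ n ∧ n ≠ 12 := by omega
  · exact c₆
  · exact .of_fin sixColumns₈ (by decide)
  · exact .of_fin sixColumns₉ (by decide)
  · exact c₆.add c₆ (by norm_num) (by norm_num)
  · rw [show n = n - 5 + 5 by omega]
    exact (ih (n - 5) (by omega) (by omega) (by omega) (by omega)).add c₅ (by omega) (by norm_num)


lemma colorable_five [NeZero n] (hn : 5 ∣ n) : (toroidalGrid 5 n).square.Colorable 5 := by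
  obtain ⟨a, rfl⟩ := hn
  have ha : 1 ≤ a := Nat.pos_of_ne_zero (right_ne_zero_of_mul (NeZero.ne (5 * a)))
  exact ((HasColumnCycle.of_fin diagonalColumns (by decide)).mul (by norm_num) ha).colorable

end toroidalGrid

open toroidalGrid in
theorem stmt6 (n : ℕ) (hn : 5 ≤ n) :
    (toroidalGrid 5 n).square.chromaticNumber =
      if n % 5 = 0 then 5 else if n = 7 then 7 else 6 := by
  have : NeZero n := ⟨by omega⟩
  split_ifs with h5 h7
  · exact chromaticNumber_eq_iff_colorable_not_colorable.2
      ⟨colorable_five (Nat.dvd_of_mod_eq_zero h5), not_colorable_four⟩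
  · subst h7
    exact chromaticNumber_eq_iff_colorable_not_colorable.2 ⟨colorable_seven, not_colorable_six⟩
  · exact chromaticNumber_eq_iff_colorable_not_colorable.2
      ⟨(hasColumnCycle_six hn h5 h7).colorable, not_colorable_five (by omega) (by omega)⟩
end

section
/- For all integers m, n ≥ 3 with m ≡ 0 (mod 11) and n ≡ 0 (mod 11), the chromatic number of the square of T_{m,n} = C_m □ C_n satisfies χ(T_{m,n}²) ≤ 6. -/
open SimpleGraph

/-!
Reducing coordinates modulo 11 and sending `(a, b)` to `a + 5 b` maps `T_{m,n}` onto the circulant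
graph `C₁₁(1, 5)` by a homomorphism that is injective on every neighbourhood. Such a homomorphism
sends distinct vertices at distance at most two to distinct vertices at distance at most two, so it
is also a homomorphism of the squares. The square of `C₁₁(1, 5)` is `C₁₁(1, 2, 4, 5)`, whose
complement is the 11-cycle of step 3, so the pairs `{x, x + 3}` (and `{8}`) are six colour classes.
-/

namespace SimpleGraph

variable {V W : Type*} {G : SimpleGraph V} {H : SimpleGraph W}

def Hom.square (f : G →g H) (hf : ∀ v, Set.InjOn f (G.neighborSet v)) :
    G.square →g H.square where
  toFun := f
  map_rel' := by
    rintro u v ⟨huv, hadj | ⟨w, huw, hwv⟩⟩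
    · exact ⟨(f.map_adj hadj).ne, Or.inl (f.map_adj hadj)⟩
    · exact ⟨fun h => huv (hf w huw.symm hwv h), Or.inr ⟨f w, f.map_adj huw, f.map_adj hwv⟩⟩

section circulant

variable {Γ Δ A : Type*} [AddGroup Γ] [AddGroup Δ] [AddGroup A] {s : Set Γ}

lemma sub_mem_of_circulantGraph_adj {a b : Γ} (h : (circulantGraph s).Adj a b) :
    b - a ∈ s ∪ -s := by
  rw [circulantGraph_adj] at h
  rcases h.2 with h | h
  · exact Or.inr (by rwa [Set.mem_neg, neg_sub])
  · exact Or.inl h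

lemma boxProd_circulantGraph (s : Set Γ) (t : Set Δ) :
    (circulantGraph s).boxProd (circulantGraph t) = circulantGraph (s ×ˢ {0} ∪ {0} ×ˢ t) := by
  ext ⟨a₁, a₂⟩ ⟨b₁, b₂⟩
  simp only [boxProd_adj, circulantGraph_adj, Prod.ext_iff, Prod.mk_sub_mk, Set.mem_union,
    Set.mem_prod, Set.mem_singleton_iff, sub_eq_zero]
  grind

def circulantGraphHom (ψ : Γ →+ A) (hψ : Set.InjOn ψ (insert 0 (s ∪ -s))) :
    circulantGraph s →g circulantGraph (ψ '' s) where
  toFun := ψ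
  map_rel' {a b} h := by
    have hne : ψ a ≠ ψ b := by
      intro he
      have : b - a = 0 := hψ (Set.mem_insert_of_mem _ (sub_mem_of_circulantGraph_adj h))
        (Set.mem_insert _ _) (by rw [map_sub, he, sub_self, map_zero])
      exact h.ne (sub_eq_zero.mp this).symm
    rw [circulantGraph_adj] at h ⊢
    exact ⟨hne, h.2.imp (fun h' => ⟨_, h', map_sub ψ a b⟩) (fun h' => ⟨_, h', map_sub ψ b a⟩)⟩

lemma circulantGraphHom_injOn_neighborSet (ψ : Γ →+ A) (hψ : Set.InjOn ψ (insert 0 (s ∪ -s)))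
    (w : Γ) : Set.InjOn (circulantGraphHom ψ hψ) ((circulantGraph s).neighborSet w) := by
  intro x hx y hy hxy
  change ψ x = ψ y at hxy
  have : x - w = y - w := hψ (Set.mem_insert_of_mem _ (sub_mem_of_circulantGraph_adj hx))
    (Set.mem_insert_of_mem _ (sub_mem_of_circulantGraph_adj hy)) (by rw [map_sub, map_sub, hxy])
  exact sub_left_inj.mp this

lemma chromaticNumber_square_circulantGraph_le (ψ : Γ →+ A)
    (hψ : Set.InjOn ψ (insert 0 (s ∪ -s))) :
    (circulantGraph s).square.chromaticNumber ≤ (circulantGraph (ψ '' s)).square.chromaticNumber :=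
  chromaticNumber_mono_of_hom
    ((circulantGraphHom ψ hψ).square (circulantGraphHom_injOn_neighborSet ψ hψ))

end circulant

end SimpleGraph

lemma toroidalGrid_eq_circulantGraph (m n : ℕ) [NeZero m] [NeZero n] :
    toroidalGrid m n = circulantGraph {(1, 0), (0, 1)} := by
  obtain ⟨k, rfl⟩ := Nat.exists_eq_succ_of_ne_zero (NeZero.ne m)
  obtain ⟨l, rfl⟩ := Nat.exists_eq_succ_of_ne_zero (NeZero.ne n)
  rw [toroidalGrid, cycleGraph_eq_circulantGraph, cycleGraph_eq_circulantGraph,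
    boxProd_circulantGraph, Set.singleton_prod_singleton, Set.singleton_prod_singleton,
    Set.singleton_union]

section torus

open Fin.CommRing

variable {m n : ℕ} [NeZero m] [NeZero n]

def Fin.toZModOfDvd {k : ℕ} (h : k ∣ m) : Fin m →+* ZMod k :=
  (ZMod.castHom h (ZMod k)).comp (ZMod.finEquiv m).toRingHom

def torusCovering (hm : 11 ∣ m) (hn : 11 ∣ n) : Fin m × Fin n →+ ZMod 11 :=
  (Fin.toZModOfDvd hm).toAddMonoidHom.coprod (5 • (Fin.toZModOfDvd hn).toAddMonoidHom)

lemma torusCovering_image (hm : 11 ∣ m) (hn : 11 ∣ n) :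
    torusCovering hm hn '' {(1, 0), (0, 1)} = {1, 5} := by
  simp [Set.image_pair, torusCovering]

lemma torusCovering_injOn (hm : 11 ∣ m) (hn : 11 ∣ n) :
    Set.InjOn (torusCovering hm hn) (insert 0 ({(1, 0), (0, 1)} ∪ -{(1, 0), (0, 1)})) := by
  simp +decide [Set.InjOn, torusCovering]

end torus

def colorMod11 : ZMod 11 → Fin 6 := ![0, 2, 4, 0, 2, 4, 1, 3, 5, 1, 3]

lemma circulantGraph_one_five_square_colorable :
    (circulantGraph ({1, 5} : Set (ZMod 11))).square.Colorable 6 :=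
  ⟨Coloring.mk colorMod11 (by unfold square; decide)⟩

theorem stmt10 (m n : ℕ) (hm3 : 3 ≤ m) (hn3 : 3 ≤ n)
    (hm : m % 11 = 0) (hn : n % 11 = 0) :
    (toroidalGrid m n).square.chromaticNumber ≤ 6 := by
  have : NeZero m := ⟨by omega⟩
  have : NeZero n := ⟨by omega⟩
  have hm11 := Nat.dvd_of_mod_eq_zero hm
  have hn11 := Nat.dvd_of_mod_eq_zero hn
  rw [toroidalGrid_eq_circulantGraph]
  calc _ ≤ (circulantGraph (torusCovering hm11 hn11 '' {(1, 0), (0, 1)})).square.chromaticNumber :=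
        chromaticNumber_square_circulantGraph_le _ (torusCovering_injOn hm11 hn11)
    _ = (circulantGraph ({1, 5} : Set (ZMod 11))).square.chromaticNumber := by
        rw [torusCovering_image]
    _ ≤ 6 := circulantGraph_one_five_square_colorable.chromaticNumber_le
end
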